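/- With v and w related as above (w coming from the inverse square root series), the inversion formula v_n = Σ_{k=1}^n (-1)^{k+1}(k+1) P^{(k)}_n(w) holds for all n ≥ 1. -/

import Mathlib

/-- The symmetric polynomial
`P_n^{(k)}(x) = Σ_{j_1+···+j_k = n, j_i ≥ 1} x_{j_1}···x_{j_k}`. -/
noncomputable def Pp {A : Type*} [Ring A] (x : ℕ → A) (k n : ℕ) : A :=
  ∑ j : Fin k → Fin (n + 1),
    if (∀ i, 1 ≤ (j i : ℕ)) ∧ (∑ i, (j i : ℕ)) = n then
      (List.ofFn fun i => x ((j i : ℕ))).prod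
    else 0

/-- `w_n = Σ_{k=1}^n ((2k-1)!!/(k! 2^k)) P^{(k)}_n(v)`, the coefficients of the
binomial series `(1 - Σ y^n v_n)^{-1/2}`. -/
noncomputable def ww {A : Type*} [CommRing A] [Algebra ℚ A] (v : ℕ → A) (n : ℕ) : A :=
  ∑ k ∈ Finset.Icc 1 n,
    ((Nat.doubleFactorial (2 * k - 1) : ℚ) / (Nat.factorial k * 2 ^ k)) • Pp v k n

/-!
With `V = Σ_{n ≥ 1} v_n X^n` and `W = Σ_{n ≥ 1} w_n X^n`, the polynomial `P^{(k)}_n(x)` is the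
`n`-th coefficient of the `k`-th power of `Σ_{m ≥ 1} x_m X^m`, so the definition of `w` says
`1 + W = f(V)` for the binomial series `f = (1 - X)^{-1/2}`. From `(1 - X) f² = 1` we get
`(1 - V)(1 + W)² = 1`, hence `1 - V = (1 + W)^{-2} = Σ_k (-1)^k (k + 1) W^k`, and comparing
`n`-th coefficients gives the formula.
-/

open PowerSeries Finset

lemma Finset.sum_range_succ_eq_sum_Icc_one {M : Type*} [AddCommMonoid M] {f : ℕ → M}
    (h0 : f 0 = 0) (n : ℕ) : ∑ k ∈ range (n + 1), f k = ∑ k ∈ Icc 1 n, f k := by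
  rw [range_eq_Ico, sum_eq_sum_Ico_succ_bot n.succ_pos, h0, zero_add]
  rfl

lemma Ring.choose_succ_mul_succ {K : Type*} [Field K] [CharZero K] (r : K) (k : ℕ) :
    Ring.choose r (k + 1) * (k + 1) = Ring.choose r k * (r - k) := by
  rw [Ring.choose_eq_smul, Ring.choose_eq_smul, descPochhammer_succ_right, Polynomial.smeval_mul,
    Polynomial.smeval_sub, Polynomial.smeval_X, Polynomial.smeval_natCast, Nat.factorial_succ]
  simp only [smul_eq_mul, npow_one, npow_zero, nsmul_one]
  push_cast
  field_simp

lemma Ring.neg_one_pow_mul_choose_neg_half (k : ℕ) :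
    (-1) ^ k * Ring.choose (-1 / 2 : ℚ) k =
      (Nat.doubleFactorial (2 * k - 1) : ℚ) / (k.factorial * 2 ^ k) := by
  induction k with
  | zero => simp
  | succ k ih =>
    have hrec : Ring.choose (-1 / 2 : ℚ) (k + 1) =
        Ring.choose (-1 / 2) k * (-1 / 2 - k) / (k + 1) := by
      rw [eq_div_iff (by positivity), Ring.choose_succ_mul_succ]
    calc (-1) ^ (k + 1) * Ring.choose (-1 / 2 : ℚ) (k + 1)
        = (-1) ^ k * Ring.choose (-1 / 2 : ℚ) k * ((2 * k + 1) / (2 * (k + 1))) := by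
          rw [hrec]; field_simp; ring
      _ = _ := by
          rw [ih, show 2 * (k + 1) - 1 = 2 * k + 1 by omega, Nat.doubleFactorial_add_one,
            Nat.factorial_succ]
          push_cast
          field_simp
          ring

lemma Ring.choose_neg_two (k : ℕ) : Ring.choose (-2 : ℤ) k = (-1) ^ k * (k + 1) := by
  rw [show (-2 : ℤ) = -((2 : ℕ) : ℤ) by norm_num, Ring.choose_neg', Nat.cast_ofNat,
    Ring.multichoose_two, Int.negOnePow_def, Units.smul_def]
  simp

namespace PowerSeries

section Coefficients

variable {R : Type*} [CommRing R]

lemma coeff_pow_eq_sum_fin (φ : R⟦X⟧) (k n : ℕ) :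
    coeff n (φ ^ k) = ∑ j : Fin k → Fin (n + 1),
      if ∑ i, (j i : ℕ) = n then ∏ i, coeff (j i) φ else 0 := by
  have htrunc : (trunc (n + 1) φ : R⟦X⟧) = ∑ m : Fin (n + 1), monomial m (coeff m φ) := by
    rw [trunc_apply, Nat.Ico_zero_eq_range, ← Fin.sum_univ_eq_sum_range,
      ← Polynomial.coeToPowerSeries.ringHom_apply, map_sum]
    simp
  calc coeff n (φ ^ k) = coeff n ((trunc (n + 1) φ : R⟦X⟧) ^ k) := by
        rw [← coeff_coe_trunc_of_lt n.lt_succ_self, ← trunc_trunc_pow,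
          coeff_coe_trunc_of_lt n.lt_succ_self]
    _ = ∑ j : Fin k → Fin (n + 1), coeff n (∏ i, monomial (j i : ℕ) (coeff (j i) φ)) := by
        rw [htrunc, ← Fin.prod_const, Fintype.prod_sum, map_sum]
    _ = _ := by simp only [prod_monomial, coeff_monomial, eq_comm (a := n)]

noncomputable def mkPos (x : ℕ → R) : R⟦X⟧ := mk fun m => if m = 0 then 0 else x m

@[simp]
lemma constantCoeff_mkPos (x : ℕ → R) : constantCoeff (mkPos x) = 0 := by
  simp [mkPos, ← coeff_zero_eq_constantCoeff_apply]

lemma coeff_mkPos_pow (x : ℕ → R) (k n : ℕ) : coeff n (mkPos x ^ k) = Pp x k n := by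
  rw [coeff_pow_eq_sum_fin, Pp]
  refine sum_congr rfl fun j _ => ?_
  simp only [mkPos, coeff_mk, List.prod_ofFn]
  by_cases hsum : ∑ i, (j i : ℕ) = n
  · by_cases hpos : ∀ i, 1 ≤ (j i : ℕ)
    · rw [if_pos hsum, if_pos ⟨hpos, hsum⟩]
      exact prod_congr rfl fun i _ => if_neg (by have := hpos i; omega)
    · push Not at hpos
      obtain ⟨i, hi⟩ := hpos
      rw [if_pos hsum, if_neg (fun h => by have := h.1 i; omega)]
      exact prod_eq_zero (mem_univ i) (if_pos (by omega))
  · rw [if_neg hsum, if_neg (fun h => hsum h.2)]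

lemma coeff_subst_eq_sum_range {S : Type*} [CommRing S] [Algebra R S] {φ : S⟦X⟧}
    (hφ : constantCoeff φ = 0) (f : R⟦X⟧) (n : ℕ) :
    coeff n (subst φ f) = ∑ k ∈ range (n + 1), coeff k f • coeff n (φ ^ k) := by
  rw [coeff_subst' (HasSubst.of_constantCoeff_zero' hφ)]
  refine finsum_eq_sum_of_support_subset _ (Function.support_subset_iff'.2 fun k hk => ?_)
  have hnk : n < k := by simpa using hk
  rw [coeff_of_lt_order (φ := φ ^ k) n ?_, smul_zero]
  exact (Nat.cast_lt.2 hnk).trans_le (le_order_pow_of_constantCoeff_eq_zero k hφ)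

end Coefficients

lemma one_add_X_pow_mul_binomialSeries_neg {R A : Type*} [CommRing R] [BinomialRing R]
    [Ring A] [Algebra R A] (d : ℕ) : (1 + X : A⟦X⟧) ^ d * binomialSeries A (-d : R) = 1 := by
  rw [← binomialSeries_nat (R := R), ← binomialSeries_add, add_neg_cancel, binomialSeries_zero]

noncomputable def invSqrtOneSub : ℚ⟦X⟧ :=
  mk fun k => (Nat.doubleFactorial (2 * k - 1) : ℚ) / (k.factorial * 2 ^ k)

lemma invSqrtOneSub_eq_rescale : invSqrtOneSub = rescale (-1) (binomialSeries ℚ (-1 / 2 : ℚ)) := by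
  ext k
  simp [invSqrtOneSub, Ring.neg_one_pow_mul_choose_neg_half]

lemma one_sub_X_mul_invSqrtOneSub_sq : (1 - X) * invSqrtOneSub ^ 2 = 1 := by
  have h : (1 + X) * binomialSeries ℚ (-1 / 2 : ℚ) ^ 2 = 1 := by
    rw [sq, ← binomialSeries_add]
    simpa using one_add_X_pow_mul_binomialSeries_neg (R := ℚ) (A := ℚ) 1
  simpa [invSqrtOneSub_eq_rescale, sub_eq_add_neg] using congrArg (rescale (-1 : ℚ)) h

end PowerSeries

section Inversion

variable {A : Type*} [CommRing A] [Algebra ℚ A] (v : ℕ → A)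

lemma one_add_mkPos_ww : 1 + mkPos (ww v) = subst (mkPos v) invSqrtOneSub := by
  ext n
  rw [coeff_subst_eq_sum_range (constantCoeff_mkPos v)]
  rcases n with _ | n
  · simp [mkPos, invSqrtOneSub]
  · rw [map_add, coeff_one, if_neg n.succ_ne_zero, zero_add, mkPos, coeff_mk,
      if_neg n.succ_ne_zero, ww, sum_range_succ_eq_sum_Icc_one (by simp)]
    refine sum_congr rfl fun k _ => ?_
    rw [coeff_mkPos_pow, invSqrtOneSub, coeff_mk]

lemma one_sub_mkPos_mul_one_add_mkPos_ww_sq : (1 - mkPos v) * (1 + mkPos (ww v)) ^ 2 = 1 := by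
  have hV := HasSubst.of_constantCoeff_zero' (constantCoeff_mkPos v)
  calc (1 - mkPos v) * (1 + mkPos (ww v)) ^ 2
      = substAlgHom hV ((1 - X) * invSqrtOneSub ^ 2) := by
        rw [map_mul, map_sub, map_one, map_pow, substAlgHom_X, coe_substAlgHom, one_add_mkPos_ww]
    _ = 1 := by rw [one_sub_X_mul_invSqrtOneSub_sq, map_one]

lemma one_sub_mkPos_eq_subst_ww :
    1 - mkPos v = subst (mkPos (ww v)) (binomialSeries ℤ (-2 : ℤ)) := by
  have hW := HasSubst.of_constantCoeff_zero' (constantCoeff_mkPos (ww v))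
  refine left_inv_eq_right_inv (one_sub_mkPos_mul_one_add_mkPos_ww_sq v) ?_
  have h := congrArg (substAlgHom hW) (one_add_X_pow_mul_binomialSeries_neg (R := ℤ) (A := ℤ) 2)
  rwa [map_mul, map_pow, map_add, map_one, substAlgHom_X, coe_substAlgHom, Nat.cast_ofNat] at h

end Inversion

/-- Inversion formula: `v_n = Σ_{k=1}^n (-1)^{k+1} (k+1) P^{(k)}_n(w)` for `n ≥ 1`. -/
theorem vv_from_ww {A : Type*} [CommRing A] [Algebra ℚ A] (v : ℕ → A)
    (n : ℕ) (hn : 1 ≤ n) :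
    v n = ∑ k ∈ Finset.Icc 1 n,
      (((-1 : ℤ) ^ (k + 1) * (k + 1)) • Pp (ww v) k n) := by
  obtain ⟨m, rfl⟩ : ∃ m, n = m + 1 := ⟨n - 1, by omega⟩
  calc v (m + 1) = -coeff (m + 1) (1 - mkPos v) := by simp [mkPos]
    _ = -∑ k ∈ range (m + 2), Ring.choose (-2 : ℤ) k • coeff (m + 1) (mkPos (ww v) ^ k) := by
        rw [one_sub_mkPos_eq_subst_ww, coeff_subst_eq_sum_range (constantCoeff_mkPos _)]
        simp
    _ = _ := by
        rw [← sum_neg_distrib, sum_range_succ_eq_sum_Icc_one (by simp)]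
        refine sum_congr rfl fun k _ => ?_
        rw [coeff_mkPos_pow, Ring.choose_neg_two, ← neg_smul]
        congr 1
        ring
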